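/- arXiv:1311.5048 — 5 statements merged into one kernel-verified Lean document; each statement's English description precedes it below -/
import Mathlib

section
/- Let G be a finite graph on vertex set V. The minimum over all nonzero line metrics ℓ on V of (Σ_{{u,v} ∈ E} ℓ(u,v)) / (Σ_{{u,v} ∈ binom(V,2)} ℓ(u,v)) is attained by a cut metric, and hence equals the edge sparsity of G. -/
open Finset

/-- For a line metric `ℓ(u,v) = |f(u)-f(v)|` given by `f : V → ℝ`, the sum of `ℓ`
over (unordered) edges of `G`, counted via ordered pairs divided by 2. -/
noncomputable def lineMetricEdgeSum {V : Type*} [Fintype V] [DecidableEq V]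
    (G : SimpleGraph V) [DecidableRel G.Adj] (f : V → ℝ) : ℝ :=
  (∑ p : V × V, if G.Adj p.1 p.2 then |f p.1 - f p.2| else 0) / 2

/-- The sum of the line metric over all unordered pairs of distinct vertices. -/
noncomputable def lineMetricPairSum {V : Type*} [Fintype V] [DecidableEq V]
    (f : V → ℝ) : ℝ :=
  (∑ p : V × V, if p.1 ≠ p.2 then |f p.1 - f p.2| else 0) / 2

/-- The number of edges of `G` between `A` and its complement. -/
def cutEdgeCard' {V : Type*} [Fintype V] [DecidableEq V]
    (G : SimpleGraph V) [DecidableRel G.Adj] (A : Finset V) : ℕ :=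
  (Finset.univ.filter fun p : V × V => p.1 ∈ A ∧ p.2 ∉ A ∧ G.Adj p.1 p.2).card

/-!
Averaging over thresholds: for `f : V → ℝ` and `t : ℝ` let `A_t = {v | f v ≤ t}`. Then
`|f u - f v| = ∫ |1_{A_t} u - 1_{A_t} v| dt`, so both the edge sum and the pair sum of the line
metric of `f` are integrals over `t` of the corresponding sums for the cut metrics of `A_t`.
If every cut has ratio at least `r`, integrating `r · pairs(A_t) ≤ edges(A_t)` gives the same
bound for `f`; hence the minimum over line metrics is attained at a minimising cut.
-/

open MeasureTheory

lemma abs_step_sub_step_eq_indicator (a b : ℝ) :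
    (fun t => |(if a ≤ t then 1 else 0 : ℝ) - (if b ≤ t then 1 else 0)|)
      = (Set.Ico (min a b) (max a b)).indicator 1 := by
  funext t
  by_cases ha : a ≤ t <;> by_cases hb : b ≤ t <;> simp [Set.indicator_apply, ha, hb]

lemma integrable_abs_step_sub_step (a b : ℝ) :
    Integrable fun t => |(if a ≤ t then 1 else 0 : ℝ) - (if b ≤ t then 1 else 0)| := by
  rw [abs_step_sub_step_eq_indicator, integrable_indicator_iff measurableSet_Ico]
  exact integrableOn_const (by simp)

lemma integral_abs_step_sub_step (a b : ℝ) :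
    ∫ t, |(if a ≤ t then 1 else 0 : ℝ) - (if b ≤ t then 1 else 0)| = |a - b| := by
  rw [abs_step_sub_step_eq_indicator, integral_indicator_one measurableSet_Ico,
    Real.volume_real_Ico, max_sub_min_eq_abs', max_eq_left (abs_nonneg _)]

section LineMetric

variable {V : Type*} [Fintype V] [DecidableEq V]

omit [DecidableEq V] in
noncomputable def lineMetricSum (P : V → V → Prop) [DecidableRel P] (f : V → ℝ) : ℝ :=
  ∑ p : V × V, if P p.1 p.2 then |f p.1 - f p.2| else 0

noncomputable def cutIndicator (A : Finset V) (v : V) : ℝ := if v ∈ A then 1 else 0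

lemma lineMetricSum_cutIndicator_sublevel (P : V → V → Prop) [DecidableRel P] (f : V → ℝ)
    (t : ℝ) :
    lineMetricSum P (cutIndicator {v | f v ≤ t})
      = ∑ p : V × V with P p.1 p.2,
          |(if f p.1 ≤ t then 1 else 0 : ℝ) - (if f p.2 ≤ t then 1 else 0)| := by
  simp only [lineMetricSum, ← sum_filter, cutIndicator, mem_filter, mem_univ, true_and]

lemma integrable_lineMetricSum_cutIndicator_sublevel (P : V → V → Prop) [DecidableRel P]
    (f : V → ℝ) : Integrable fun t => lineMetricSum P (cutIndicator {v | f v ≤ t}) := by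
  simp only [lineMetricSum_cutIndicator_sublevel]
  exact integrable_finsetSum _ fun p _ => integrable_abs_step_sub_step _ _

lemma integral_lineMetricSum_cutIndicator_sublevel (P : V → V → Prop) [DecidableRel P]
    (f : V → ℝ) :
    ∫ t, lineMetricSum P (cutIndicator {v | f v ≤ t}) = lineMetricSum P f := by
  simp only [lineMetricSum_cutIndicator_sublevel]
  rw [integral_finsetSum _ fun p _ => integrable_abs_step_sub_step _ _, lineMetricSum,
    ← sum_filter]
  exact sum_congr rfl fun p _ => integral_abs_step_sub_step _ _

lemma mul_lineMetricSum_le_of_forall_cut (P Q : V → V → Prop) [DecidableRel P]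
    [DecidableRel Q] (r : ℝ)
    (hcut : ∀ A : Finset V,
      r * lineMetricSum Q (cutIndicator A) ≤ lineMetricSum P (cutIndicator A))
    (f : V → ℝ) : r * lineMetricSum Q f ≤ lineMetricSum P f := by
  rw [← integral_lineMetricSum_cutIndicator_sublevel Q,
    ← integral_lineMetricSum_cutIndicator_sublevel P, ← integral_const_mul]
  exact integral_mono ((integrable_lineMetricSum_cutIndicator_sublevel Q f).const_mul r)
    (integrable_lineMetricSum_cutIndicator_sublevel P f) fun t => hcut _

lemma lineMetricSum_cutIndicator {P : V → V → Prop} [DecidableRel P]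
    (hP : ∀ u v, P u v → P v u) (A : Finset V) :
    lineMetricSum P (cutIndicator A)
      = 2 * #{p : V × V | p.1 ∈ A ∧ p.2 ∉ A ∧ P p.1 p.2} := by
  have hterm : ∀ p : V × V,
      (if P p.1 p.2 then |cutIndicator A p.1 - cutIndicator A p.2| else 0)
        = (if p.1 ∈ A ∧ p.2 ∉ A ∧ P p.1 p.2 then 1 else 0)
          + (if p.2 ∈ A ∧ p.1 ∉ A ∧ P p.2 p.1 then 1 else 0) := by
    rintro ⟨u, v⟩
    have hsymm : P u v ↔ P v u := ⟨hP u v, hP v u⟩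
    by_cases hu : u ∈ A <;> by_cases hv : v ∈ A <;> by_cases huv : P u v <;>
      simp [cutIndicator, hu, hv, huv, hsymm.not.1, hsymm.1]
  simp only [lineMetricSum, hterm, sum_add_distrib]
  have hswap : (∑ p : V × V, if p.2 ∈ A ∧ p.1 ∉ A ∧ P p.2 p.1 then (1 : ℝ) else 0)
      = ∑ p : V × V, if p.1 ∈ A ∧ p.2 ∉ A ∧ P p.1 p.2 then 1 else 0 :=
    (Equiv.prodComm V V).sum_comp fun p => if p.1 ∈ A ∧ p.2 ∉ A ∧ P p.1 p.2 then 1 else 0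
  rw [hswap, sum_boole]
  ring

end LineMetric

section Sparsity

variable {V : Type*} [Fintype V] [DecidableEq V] (G : SimpleGraph V) [DecidableRel G.Adj]

noncomputable def cutRatio (A : Finset V) : ℝ :=
  (cutEdgeCard' G A : ℝ) / ((A.card : ℝ) * ((Aᶜ : Finset V).card : ℝ))

omit [DecidableEq V] in
lemma exists_mem_and_notMem {A : Finset V} (hA : A.Nonempty) (hA' : A ≠ univ) :
    ∃ u v, u ∈ A ∧ v ∉ A := by
  obtain ⟨u, hu⟩ := hA
  obtain ⟨v, hv⟩ : ∃ v, v ∉ A := by simpa [eq_univ_iff_forall] using hA'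
  exact ⟨u, v, hu, hv⟩

lemma lineMetricSum_adj_cutIndicator (A : Finset V) :
    lineMetricSum G.Adj (cutIndicator A) = 2 * cutEdgeCard' G A := by
  rw [lineMetricSum_cutIndicator fun _ _ h => h.symm, cutEdgeCard']

lemma lineMetricSum_ne_cutIndicator (A : Finset V) :
    lineMetricSum Ne (cutIndicator A) = 2 * (A.card * (Aᶜ : Finset V).card) := by
  have hpairs :
      ({p : V × V | p.1 ∈ A ∧ p.2 ∉ A ∧ p.1 ≠ p.2} : Finset (V × V)) = A ×ˢ Aᶜ := by
    ext ⟨u, v⟩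
    simp only [mem_filter, mem_univ, true_and, mem_product, mem_compl]
    exact ⟨fun h => ⟨h.1, h.2.1⟩, fun h => ⟨h.1, h.2, fun huv => h.2 (huv ▸ h.1)⟩⟩
  rw [lineMetricSum_cutIndicator fun _ _ => Ne.symm, hpairs, card_product]
  push_cast
  ring

lemma lineMetric_ratio_cutIndicator (A : Finset V) :
    lineMetricEdgeSum G (cutIndicator A) / lineMetricPairSum (cutIndicator A)
      = cutRatio G A := by
  rw [lineMetricEdgeSum, lineMetricPairSum, ← lineMetricSum, ← lineMetricSum,
    lineMetricSum_adj_cutIndicator, lineMetricSum_ne_cutIndicator, cutRatio,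
    mul_div_cancel_left₀ _ two_ne_zero, mul_div_cancel_left₀ _ two_ne_zero]

lemma mul_card_mul_card_compl_le_cutEdgeCard' {r : ℝ}
    (hr : ∀ A : Finset V, A.Nonempty → A ≠ univ → r ≤ cutRatio G A) (A : Finset V) :
    r * (A.card * (Aᶜ : Finset V).card) ≤ cutEdgeCard' G A := by
  by_cases hproper : A.Nonempty ∧ A ≠ univ
  · obtain ⟨u, v, hu, hv⟩ := exists_mem_and_notMem hproper.1 hproper.2
    have hpos : (0 : ℝ) < A.card * (Aᶜ : Finset V).card := by
      have := card_pos.2 ⟨u, hu⟩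
      have := card_pos.2 ⟨v, mem_compl.2 hv⟩
      positivity
    exact (le_div_iff₀ hpos).1 (hr A hproper.1 hproper.2)
  · have hzero : (A.card : ℝ) * (Aᶜ : Finset V).card = 0 := by
      rcases not_and_or.1 hproper with hA | hA
      · simp [not_nonempty_iff_eq_empty.1 hA]
      · simp [not_not.1 hA]
    rw [hzero, mul_zero]
    positivity

lemma lineMetricPairSum_pos {f : V → ℝ} (hf : ∃ u v, f u ≠ f v) :
    0 < lineMetricPairSum f := by
  obtain ⟨u, v, huv⟩ := hf
  have hne : u ≠ v := fun h => huv (congrArg f h)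
  refine div_pos (lt_of_lt_of_le ?_ (single_le_sum (fun p _ => ?_) (mem_univ (u, v)))) two_pos
  · simpa [hne] using sub_ne_zero.2 huv
  · split_ifs <;> positivity

lemma cutRatio_le_lineMetric_ratio (r : ℝ)
    (hr : ∀ A : Finset V, A.Nonempty → A ≠ univ → r ≤ cutRatio G A)
    {f : V → ℝ} (hf : ∃ u v, f u ≠ f v) :
    r ≤ lineMetricEdgeSum G f / lineMetricPairSum f := by
  have hcut : ∀ A : Finset V,
      r * lineMetricSum Ne (cutIndicator A) ≤ lineMetricSum G.Adj (cutIndicator A) := by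
    intro A
    rw [lineMetricSum_adj_cutIndicator, lineMetricSum_ne_cutIndicator, mul_left_comm]
    gcongr
    exact mul_card_mul_card_compl_le_cutEdgeCard' G hr A
  rw [le_div_iff₀ (lineMetricPairSum_pos hf), lineMetricPairSum, lineMetricEdgeSum,
    ← lineMetricSum, ← lineMetricSum, mul_div_assoc']
  gcongr
  exact mul_lineMetricSum_le_of_forall_cut G.Adj Ne r hcut f

end Sparsity

/-- The minimum over nonzero line metrics `ℓ` of
`(∑_{{u,v}∈E} ℓ(u,v)) / (∑_{{u,v}∈binom(V,2)} ℓ(u,v))` is attained by a cut metric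
(a line metric given by a nonconstant `f : V → {0,1}`), and equals the edge sparsity of `G`. -/
theorem stmt_5 {V : Type*} [Fintype V] [DecidableEq V] (G : SimpleGraph V)
    [DecidableRel G.Adj] (hV : 2 ≤ Fintype.card V) :
    (∃ g : V → Bool, (∃ u v, g u ≠ g v) ∧
      (letI f : V → ℝ := fun v => if g v then 1 else 0;
        lineMetricEdgeSum G f / lineMetricPairSum f)
        = sInf {r : ℝ | ∃ f : V → ℝ, (∃ u v, f u ≠ f v) ∧
            r = lineMetricEdgeSum G f / lineMetricPairSum f}) ∧
    sInf {r : ℝ | ∃ f : V → ℝ, (∃ u v, f u ≠ f v) ∧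
        r = lineMetricEdgeSum G f / lineMetricPairSum f}
      = sInf {r : ℝ | ∃ A : Finset V, A.Nonempty ∧ A ≠ Finset.univ ∧
        r = (cutEdgeCard' G A : ℝ) / ((A.card : ℝ) * ((Aᶜ : Finset V).card : ℝ))} := by
  obtain ⟨u₀, v₀, huv₀⟩ := Fintype.exists_pair_of_one_lt_card (α := V) (by omega)
  have hproper : ({u₀} : Finset V).Nonempty ∧ {u₀} ≠ univ :=
    ⟨singleton_nonempty u₀, fun h => huv₀ (mem_singleton.1 (h ▸ mem_univ v₀)).symm⟩
  obtain ⟨A₀, hA₀, hmin⟩ := exists_min_image {A : Finset V | A.Nonempty ∧ A ≠ univ}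
    (cutRatio G) ⟨{u₀}, mem_filter.2 ⟨mem_univ _, hproper⟩⟩
  simp only [mem_filter, mem_univ, true_and] at hA₀ hmin
  obtain ⟨u, v, hu, hv⟩ := exists_mem_and_notMem hA₀.1 hA₀.2
  have hline : IsLeast {r : ℝ | ∃ f : V → ℝ, (∃ u v, f u ≠ f v) ∧
      r = lineMetricEdgeSum G f / lineMetricPairSum f} (cutRatio G A₀) :=
    ⟨⟨cutIndicator A₀, ⟨u, v, by simp [cutIndicator, hu, hv]⟩,
        (lineMetric_ratio_cutIndicator G A₀).symm⟩,
      fun _ ⟨_, hf, hr⟩ =>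
        hr ▸ cutRatio_le_lineMetric_ratio G _ (fun A h1 h2 => hmin A ⟨h1, h2⟩) hf⟩
  have hcut : IsLeast {r : ℝ | ∃ A : Finset V, A.Nonempty ∧ A ≠ Finset.univ ∧
      r = (cutEdgeCard' G A : ℝ) / ((A.card : ℝ) * ((Aᶜ : Finset V).card : ℝ))}
      (cutRatio G A₀) :=
    ⟨⟨A₀, hA₀.1, hA₀.2, rfl⟩, fun _ ⟨A, h1, h2, hr⟩ => hr ▸ hmin A ⟨h1, h2⟩⟩
  rw [hline.csInf_eq, hcut.csInf_eq]
  refine ⟨⟨fun v => decide (v ∈ A₀), ⟨u, v, by simp [hu, hv]⟩, ?_⟩, rfl⟩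
  simp only [decide_eq_true_eq]
  exact lineMetric_ratio_cutIndicator G A₀
end

section
/- The m×m grid graph has no separator of size less than m/4: if S ⊆ V is a set of vertices of the m×m grid such that every connected component of the grid minus S has at most (2/3)m² vertices, then |S| ≥ m/4. -/
/-!
If `|S| < m / 4`, then fewer than `m` rows and fewer than `m` columns meet `S`. Every row avoiding
`S` is joined to every column avoiding `S` (they cross outside `S`), so all rows avoiding `S`
lie in one component of the grid minus `S`. There are at least `m - |S| > 3m/4` such rows, so
this component has more than `(3/4)m² > (2/3)m²` vertices.
-/

/-- The `m × m` grid graph: vertices `Fin m × Fin m`, edges between points at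
`ℓ¹`-distance 1. -/
def gridGraph (m : ℕ) : SimpleGraph (Fin m × Fin m) :=
  SimpleGraph.fromRel (fun a b =>
    (a.1 = b.1 ∧ (b.2 : ℕ) = (a.2 : ℕ) + 1) ∨ (a.2 = b.2 ∧ (b.1 : ℕ) = (a.1 : ℕ) + 1))

open Finset SimpleGraph

namespace SimpleGraph

variable {V : Type*} {G : SimpleGraph V} {s : Set V}

lemma induce_reachable_of_pathGraph {n : ℕ} (f : Fin n → V) (hs : ∀ k, f k ∈ s)
    (hf : ∀ k k', (pathGraph n).Adj k k' → G.Adj (f k) (f k')) (k k' : Fin n) :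
    (G.induce s).Reachable ⟨f k, hs k⟩ ⟨f k', hs k'⟩ :=
  (pathGraph_preconnected n k k').map
    (⟨fun k => ⟨f k, hs k⟩, fun h => hf _ _ h⟩ : pathGraph n →g G.induce s)

end SimpleGraph

lemma Finset.card_sub_card_le_card_compl_image {α β : Type*} [Fintype α] [DecidableEq α]
    (s : Finset β) (f : β → α) : Fintype.card α - #s ≤ #(s.image f)ᶜ := by
  rw [card_compl]
  exact Nat.sub_le_sub_left card_image_le _

namespace gridGraph

variable {m : ℕ}

lemma adj_of_pathGraph_adj_snd (i : Fin m) {j j' : Fin m} (h : (pathGraph m).Adj j j') :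
    (gridGraph m).Adj (i, j) (i, j') := by
  rw [pathGraph_adj] at h
  rw [gridGraph, fromRel_adj]
  refine ⟨fun he => by simp_all, ?_⟩
  rcases h with h | h
  · exact Or.inl (Or.inl ⟨rfl, h.symm⟩)
  · exact Or.inr (Or.inl ⟨rfl, h.symm⟩)

lemma adj_of_pathGraph_adj_fst (j : Fin m) {i i' : Fin m} (h : (pathGraph m).Adj i i') :
    (gridGraph m).Adj (i, j) (i', j) := by
  rw [pathGraph_adj] at h
  rw [gridGraph, fromRel_adj]
  refine ⟨fun he => by simp_all, ?_⟩
  rcases h with h | h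
  · exact Or.inl (Or.inr ⟨rfl, h.symm⟩)
  · exact Or.inr (Or.inr ⟨rfl, h.symm⟩)

variable {S : Finset (Fin m × Fin m)}

lemma reachable_of_fst_notMem_image {j₀ : Fin m} (hj₀ : j₀ ∉ S.image Prod.snd)
    (v w : ↥(↑S : Set (Fin m × Fin m))ᶜ)
    (hv : v.1.1 ∉ S.image Prod.fst) (hw : w.1.1 ∉ S.image Prod.fst) :
    ((gridGraph m).induce (↑S : Set (Fin m × Fin m))ᶜ).Reachable v w := by
  have row_free {i : Fin m} (hi : i ∉ S.image Prod.fst) (j : Fin m) :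
      (i, j) ∈ (↑S : Set (Fin m × Fin m))ᶜ :=
    fun h => hi (mem_image_of_mem Prod.fst h)
  have col_free (i : Fin m) : (i, j₀) ∈ (↑S : Set (Fin m × Fin m))ᶜ :=
    fun h => hj₀ (mem_image_of_mem Prod.snd h)
  have along_row {i : Fin m} (hi : i ∉ S.image Prod.fst) :=
    induce_reachable_of_pathGraph (fun j => (i, j)) (row_free hi) fun _ _ => adj_of_pathGraph_adj_snd i
  exact ((along_row hv v.1.2 j₀).trans
    (induce_reachable_of_pathGraph (fun i => (i, j₀)) col_free
      (fun _ _ => adj_of_pathGraph_adj_fst j₀) v.1.1 w.1.1)).trans (along_row hw j₀ w.1.2)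

lemma exists_connectedComponent_card_ge (hS : #S < m) :
    ∃ C : ((gridGraph m).induce (↑S : Set (Fin m × Fin m))ᶜ).ConnectedComponent,
      (m - #S) * m ≤ C.supp.ncard := by
  set rows := (S.image Prod.fst)ᶜ
  have hrows : m - #S ≤ #rows := by
    simpa using S.card_sub_card_le_card_compl_image Prod.fst
  have hcols : m - #S ≤ #(S.image Prod.snd)ᶜ := by
    simpa using S.card_sub_card_le_card_compl_image Prod.snd
  obtain ⟨i₀, hi₀⟩ : rows.Nonempty := card_pos.mp (by omega)
  obtain ⟨j₀, hj₀⟩ : (S.image Prod.snd)ᶜ.Nonempty := card_pos.mp (by omega)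
  rw [mem_compl] at hi₀ hj₀
  have hroot : (i₀, j₀) ∈ (↑S : Set (Fin m × Fin m))ᶜ := fun h => hi₀ (mem_image_of_mem _ h)
  let C := ((gridGraph m).induce (↑S : Set (Fin m × Fin m))ᶜ).connectedComponentMk ⟨_, hroot⟩
  refine ⟨C, ?_⟩
  have hsub : (↑(rows ×ˢ (univ : Finset (Fin m))) : Set (Fin m × Fin m)) ⊆
      Subtype.val '' C.supp := by
    rintro ⟨i, j⟩ hij
    have hi : i ∉ S.image Prod.fst := mem_compl.mp (mem_product.mp hij).1
    refine ⟨⟨(i, j), fun h => hi (mem_image_of_mem _ h)⟩, ?_, rfl⟩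
    exact ConnectedComponent.sound (reachable_of_fst_notMem_image hj₀ _ _ hi hi₀)
  have := Set.ncard_le_ncard hsub (Set.toFinite _)
  rw [Set.ncard_coe_finset, Set.ncard_image_of_injective _ Subtype.val_injective,
    card_product, card_univ, Fintype.card_fin] at this
  exact (Nat.mul_le_mul_right m hrows).trans this

end gridGraph

/-- The `m × m` grid has no separator of size less than `m/4`: if removing `S` leaves
all connected components with at most `(2/3)m²` vertices, then `|S| ≥ m/4`. -/
theorem stmt_10 (m : ℕ) (S : Finset (Fin m × Fin m))
    (hS : ∀ C : ((gridGraph m).induce ((↑S : Set (Fin m × Fin m))ᶜ)).ConnectedComponent,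
      (C.supp.ncard : ℝ) ≤ (2 / 3) * (m ^ 2 : ℝ)) :
    (m : ℝ) / 4 ≤ (S.card : ℝ) := by
  by_contra! hlt
  have hm : (0 : ℝ) < m := by linarith [(Nat.cast_nonneg #S : (0 : ℝ) ≤ #S)]
  have hSm : #S < m := by exact_mod_cast (show (#S : ℝ) < m by linarith)
  obtain ⟨C, hC⟩ := gridGraph.exists_connectedComponent_card_ge hSm
  have hC' : ((m : ℝ) - #S) * m ≤ C.supp.ncard := by
    rw [← Nat.cast_sub hSm.le]
    exact_mod_cast hC
  nlinarith [hS C]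
end

section
/- Let β > 0 and let G be a graph on n vertices such that every induced subgraph H of G on at least (2/3)n vertices has edge sparsity at most β. Then G has a balanced edge cut (A, V\A) with (1/3)n ≤ |A| ≤ (2/3)n and |E(A, V\A)| ≤ β·n². -/
/-- The number of edges of `G` with one endpoint in `A` and the other in `B`
(for disjoint `A`, `B`, each such edge is counted once). -/
def edgesBetween {V : Type*} [Fintype V] [DecidableEq V]
    (G : SimpleGraph V) [DecidableRel G.Adj] (A B : Finset V) : ℕ :=
  (Finset.univ.filter fun p : V × V => p.1 ∈ A ∧ p.2 ∈ B ∧ G.Adj p.1 p.2).card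

/-!
Grow a set `B` greedily, starting from `∅`, keeping `|E(B, Bᶜ)| ≤ β |B| n`. While `|B| < n / 3`,
the complement `Bᶜ` has at least `2n / 3` vertices, so it has a cut of sparsity at most `β`; add
its smaller side `S` to `B`. The new cut has at most `|E(S, Bᶜ \ S)| ≤ β |S| n` edges on top of
the old one, and `|B ∪ S| ≤ (n + |B|) / 2 < 2n / 3`, so the first `B` with `|B| ≥ n / 3` is
balanced and has at most `β |B| n ≤ β n²` cut edges.
-/

open Finset

section EdgesBetween

variable {V : Type*} [Fintype V] [DecidableEq V] (G : SimpleGraph V) [DecidableRel G.Adj]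

lemma edgesBetween_comm (A B : Finset V) : edgesBetween G A B = edgesBetween G B A := by
  refine card_bij' (fun p _ => p.swap) (fun p _ => p.swap) ?_ ?_ (fun _ _ => rfl)
    (fun _ _ => rfl) <;>
  · intro p hp
    simp only [mem_filter, mem_univ, true_and] at hp ⊢
    exact ⟨hp.2.1, hp.1, hp.2.2.symm⟩

lemma edgesBetween_empty_left (B : Finset V) : edgesBetween G ∅ B = 0 := by
  simp [edgesBetween]

lemma edgesBetween_mono_right (A : Finset V) {B C : Finset V} (h : B ⊆ C) :
    edgesBetween G A B ≤ edgesBetween G A C :=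
  card_le_card fun p hp => by
    simp only [mem_filter, mem_univ, true_and] at hp ⊢
    exact ⟨hp.1, h hp.2.1, hp.2.2⟩

lemma edgesBetween_union_left_le (A B C : Finset V) :
    edgesBetween G (A ∪ B) C ≤ edgesBetween G A C + edgesBetween G B C := by
  refine (card_le_card fun p hp => ?_).trans (card_union_le _ _)
  simp only [mem_filter, mem_univ, true_and, mem_union] at hp ⊢
  rcases hp with ⟨hA | hB, hC⟩
  · exact Or.inl ⟨hA, hC⟩
  · exact Or.inr ⟨hB, hC⟩

lemma edgesBetween_union_compl_le (B A : Finset V) :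
    edgesBetween G (B ∪ A) (B ∪ A)ᶜ ≤
      edgesBetween G B Bᶜ + edgesBetween G A (Bᶜ \ A) := by
  rw [compl_union, ← sdiff_eq_inter_compl]
  exact (edgesBetween_union_left_le G B A _).trans
    (Nat.add_le_add_right (edgesBetween_mono_right G B sdiff_subset) _)

lemma exists_small_side_of_sparse_cut (β : ℝ) {W A : Finset V} (hA : A.Nonempty) (hAW : A ⊂ W)
    (hcut : (edgesBetween G A (W \ A) : ℝ) ≤ β * #A * #(W \ A)) :
    ∃ S ⊆ W, S.Nonempty ∧ 2 * #S ≤ #W ∧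
      (edgesBetween G S (W \ S) : ℝ) ≤ β * #S * #(W \ S) := by
  have hcard : #(W \ A) + #A = #W := card_sdiff_add_card_eq_card hAW.subset
  by_cases hsmall : 2 * #A ≤ #W
  · exact ⟨A, hAW.subset, hA, hsmall, hcut⟩
  · refine ⟨W \ A, sdiff_subset, sdiff_nonempty.mpr hAW.not_subset, by omega, ?_⟩
    rw [Finset.sdiff_sdiff_eq_self hAW.subset, edgesBetween_comm]
    linarith

end EdgesBetween

theorem exists_balanced_cut_of_small_sparse_cut {V : Type*} [Fintype V] [DecidableEq V]
    (G : SimpleGraph V) [DecidableRel G.Adj] {n : ℕ} (hn : Fintype.card V = n) {β : ℝ}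
    (hβ : 0 ≤ β)
    (hsparse : ∀ W : Finset V, (2 / 3) * (n : ℝ) ≤ #W →
      ∃ A : Finset V, A.Nonempty ∧ A ⊂ W ∧ (edgesBetween G A (W \ A) : ℝ) ≤ β * #A * #(W \ A))
    (B : Finset V) (hB : 3 * #B < n) (hcut : (edgesBetween G B Bᶜ : ℝ) ≤ β * #B * n) :
    ∃ A : Finset V, n ≤ 3 * #A ∧ 3 * #A ≤ 2 * n ∧
      (edgesBetween G A Aᶜ : ℝ) ≤ β * #A * n := by
  have hBc : #Bᶜ = n - #B := by rw [card_compl, hn]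
  have hW : (2 / 3) * (n : ℝ) ≤ #Bᶜ := by
    rw [div_mul_eq_mul_div, div_le_iff₀ (by norm_num)]
    exact_mod_cast (show 2 * n ≤ #Bᶜ * 3 by omega)
  obtain ⟨A₀, hA₀, hA₀B, hcut₀⟩ := hsparse Bᶜ hW
  obtain ⟨S, hSB, hS, hS2, hcutS⟩ := exists_small_side_of_sparse_cut G β hA₀ hA₀B hcut₀
  have hunion : #(B ∪ S) = #B + #S :=
    card_union_of_disjoint (disjoint_right.mpr fun _ hx => mem_compl.mp (hSB hx))
  have hcut' : (edgesBetween G (B ∪ S) (B ∪ S)ᶜ : ℝ) ≤ β * #(B ∪ S) * n := by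
    have hrest : (#(Bᶜ \ S) : ℝ) ≤ n := by exact_mod_cast hn ▸ card_le_univ _
    calc (edgesBetween G (B ∪ S) (B ∪ S)ᶜ : ℝ)
        ≤ edgesBetween G B Bᶜ + edgesBetween G S (Bᶜ \ S) := by
          exact_mod_cast edgesBetween_union_compl_le G B S
      _ ≤ β * #B * n + β * #S * n := by gcongr; exact hcutS.trans (by gcongr)
      _ = β * #(B ∪ S) * n := by rw [hunion]; push_cast; ring
  by_cases hsmall : 3 * #(B ∪ S) < n
  · exact exists_balanced_cut_of_small_sparse_cut G hn hβ hsparse (B ∪ S) hsmall hcut'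
  · exact ⟨B ∪ S, by omega, by omega, hcut'⟩
termination_by #Bᶜ
decreasing_by
  rw [compl_union, ← sdiff_eq_inter_compl]
  exact card_lt_card (sdiff_ssubset hSB hS)

/-- If every induced subgraph of `G` on at least `(2/3)n` vertices has edge sparsity at
most `β`, then `G` has a balanced edge cut `(A, V∖A)` with `(1/3)n ≤ |A| ≤ (2/3)n` and
`|E(A, V∖A)| ≤ β·n²`. -/
theorem stmt_12 {V : Type*} [Fintype V] [DecidableEq V] (G : SimpleGraph V)
    [DecidableRel G.Adj] (n : ℕ) (hn : Fintype.card V = n) (β : ℝ) (hβ : 0 < β)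
    (hsparse : ∀ W : Finset V, (2 / 3) * (n : ℝ) ≤ (W.card : ℝ) →
      ∃ A : Finset V, A.Nonempty ∧ A ⊂ W ∧
        (edgesBetween G A (W \ A) : ℝ) ≤ β * (A.card : ℝ) * (((W \ A) : Finset V).card : ℝ)) :
    ∃ A : Finset V, (n : ℝ) / 3 ≤ (A.card : ℝ) ∧ (A.card : ℝ) ≤ (2 / 3) * (n : ℝ) ∧
      (edgesBetween G A Aᶜ : ℝ) ≤ β * (n : ℝ) ^ 2 := by
  rcases Nat.eq_zero_or_pos n with rfl | hpos
  · exact ⟨∅, by simp, by simp, by simp [edgesBetween_empty_left]⟩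
  obtain ⟨A, hA₁, hA₂, hcut⟩ := exists_balanced_cut_of_small_sparse_cut G hn hβ.le hsparse ∅
    (by simpa using hpos) (by simp [edgesBetween_empty_left])
  have hAn : (#A : ℝ) ≤ n := by exact_mod_cast hn ▸ card_le_univ A
  refine ⟨A, ?_, ?_, ?_⟩
  · rw [div_le_iff₀ (by norm_num)]
    exact_mod_cast (show n ≤ #A * 3 by omega)
  · rw [div_mul_eq_mul_div, le_div_iff₀ (by norm_num)]
    exact_mod_cast (show #A * 3 ≤ 2 * n by omega)
  · calc (edgesBetween G A Aᶜ : ℝ) ≤ β * #A * n := hcut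
      _ ≤ β * n * n := by gcongr
      _ = β * (n : ℝ) ^ 2 := by ring
end

section
/- Let α > 0 and let G be a graph on n vertices such that every induced subgraph H of G on at least (2/3)n vertices has vertex sparsity at most α. Then G has a separator of size at most α·n². -/
/-!
Keep a partition `(A, B, S)` of `V` with no edges between `A` and `B`, `|B| ≤ 2n/3` and
`|S| ≤ α n (n - |A|)`, starting from `A = V`. While `|A| > 2n/3`, split `G[A]` by a sparse vertex cut
`(A₁, B₁, S₁)` with `|B₁| ≤ |A₁|`, and move `B₁` into `B` and `S₁` into `S`. Since `|B₁| ≤ |A|/2`,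
the new `B` has at most `n - |A|/2 < 2n/3` vertices, and since
`|S₁| ≤ α |A₁ ∪ S₁| |B₁ ∪ S₁| ≤ α n (|A| - |A₁|)`, every vertex leaving `A` costs at most `α n`
vertices of the separator, so `|S| ≤ α n²` throughout.
-/

open Finset

namespace SimpleGraph

variable {V : Type*} [DecidableEq V] (G : SimpleGraph V)

structure IsSeparation (W A B S : Finset V) : Prop where
  disjoint_left_right : Disjoint A B
  disjoint_left_sep : Disjoint A S
  disjoint_right_sep : Disjoint B S
  union_eq : A ∪ B ∪ S = W
  not_adj : ∀ a ∈ A, ∀ b ∈ B, ¬ G.Adj a b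

namespace IsSeparation

variable {G} {W A B S A₁ B₁ S₁ : Finset V}

theorem symm (h : G.IsSeparation W A B S) : G.IsSeparation W B A S where
  disjoint_left_right := h.disjoint_left_right.symm
  disjoint_left_sep := h.disjoint_right_sep
  disjoint_right_sep := h.disjoint_left_sep
  union_eq := by rw [union_comm B, h.union_eq]
  not_adj b hb a ha hba := h.not_adj a ha b hb hba.symm

theorem left_subset (h : G.IsSeparation W A B S) : A ⊆ W :=
  h.union_eq ▸ subset_union_left.trans subset_union_left

theorem right_subset (h : G.IsSeparation W A B S) : B ⊆ W :=
  h.union_eq ▸ subset_union_right.trans subset_union_left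

theorem sep_subset (h : G.IsSeparation W A B S) : S ⊆ W :=
  h.union_eq ▸ subset_union_right

theorem card_add (h : G.IsSeparation W A B S) : #A + #B + #S = #W := by
  rw [← h.union_eq,
    card_union_of_disjoint (disjoint_union_left.2 ⟨h.disjoint_left_sep, h.disjoint_right_sep⟩),
    card_union_of_disjoint h.disjoint_left_right]

theorem refine (h : G.IsSeparation W A B S) (h₁ : G.IsSeparation A A₁ B₁ S₁) :
    G.IsSeparation W A₁ (B ∪ B₁) (S ∪ S₁) where
  disjoint_left_right := disjoint_union_right.2
    ⟨h.disjoint_left_right.mono_left h₁.left_subset, h₁.disjoint_left_right⟩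
  disjoint_left_sep := disjoint_union_right.2
    ⟨h.disjoint_left_sep.mono_left h₁.left_subset, h₁.disjoint_left_sep⟩
  disjoint_right_sep := disjoint_union_left.2
    ⟨disjoint_union_right.2
        ⟨h.disjoint_right_sep, h.disjoint_left_right.symm.mono_right h₁.sep_subset⟩,
      disjoint_union_right.2
        ⟨h.disjoint_left_sep.mono_left h₁.right_subset, h₁.disjoint_right_sep⟩⟩
  union_eq := by
    rw [← h.union_eq, ← h₁.union_eq]
    ext
    simp only [mem_union]
    tauto
  not_adj a ha b hb := by
    rcases mem_union.1 hb with hb | hb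
    · exact h.not_adj a (h₁.left_subset ha) b hb
    · exact h₁.not_adj a ha b hb

end IsSeparation

/-- The vertex sparsity of `G.induce W` is at most `α`, with the denominator cleared. -/
def HasSparseVertexCut (α : ℝ) (W : Finset V) : Prop :=
  ∃ A B S : Finset V, A.Nonempty ∧ B.Nonempty ∧ G.IsSeparation W A B S ∧
    (#S : ℝ) ≤ α * #(A ∪ S) * #(B ∪ S)

theorem HasSparseVertexCut.exists_card_le {α : ℝ} {W : Finset V}
    (h : G.HasSparseVertexCut α W) :
    ∃ A B S : Finset V, B.Nonempty ∧ #B ≤ #A ∧ G.IsSeparation W A B S ∧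
      (#S : ℝ) ≤ α * #(A ∪ S) * #(B ∪ S) := by
  obtain ⟨A, B, S, hA, hB, hsep, hS⟩ := h
  rcases le_total #B #A with hBA | hAB
  · exact ⟨A, B, S, hB, hBA, hsep, hS⟩
  · exact ⟨B, A, S, hA, hAB, hsep.symm, hS.trans_eq (mul_right_comm _ _ _)⟩

variable [Fintype V]

def IsPartialSeparation (α : ℝ) (A B S : Finset V) : Prop :=
  G.IsSeparation univ A B S ∧ (#B : ℝ) ≤ 2 / 3 * Fintype.card V ∧
    (#S : ℝ) ≤ α * Fintype.card V * (Fintype.card V - #A)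

variable {G}

theorem isPartialSeparation_univ (α : ℝ) : G.IsPartialSeparation α univ ∅ ∅ :=
  ⟨⟨disjoint_empty_right _, disjoint_empty_right _, disjoint_empty_right _, by simp,
    by simp⟩, by simp, by simp⟩

theorem IsPartialSeparation.exists_card_lt {α : ℝ} (hα : 0 ≤ α) {A B S : Finset V}
    (h : G.IsPartialSeparation α A B S) (hA : 2 / 3 * (Fintype.card V : ℝ) < #A)
    (hcut : G.HasSparseVertexCut α A) :
    ∃ A' B' S' : Finset V, G.IsPartialSeparation α A' B' S' ∧ #A' < #A := by
  obtain ⟨hsep, hB, hS⟩ := h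
  obtain ⟨A₁, B₁, S₁, hB₁, hB₁A₁, hsep₁, hS₁⟩ := hcut.exists_card_le
  have hAB : (#A : ℝ) + #B ≤ Fintype.card V := by
    have := hsep.card_add
    rw [card_univ] at this
    exact_mod_cast (by omega : #A + #B ≤ Fintype.card V)
  have hA₁ : (#A₁ : ℝ) + #B₁ + #S₁ = #A := by exact_mod_cast hsep₁.card_add
  have hB₁A₁' : (#B₁ : ℝ) ≤ #A₁ := by exact_mod_cast hB₁A₁
  have hcardB : (#(B ∪ B₁) : ℝ) ≤ #B + #B₁ := by exact_mod_cast card_union_le B B₁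
  have hcardS : (#(S ∪ S₁) : ℝ) ≤ #S + #S₁ := by exact_mod_cast card_union_le S S₁
  have hA₁S₁ : (#(A₁ ∪ S₁) : ℝ) ≤ Fintype.card V := by exact_mod_cast card_le_univ _
  have hB₁S₁ : (#(B₁ ∪ S₁) : ℝ) = #B₁ + #S₁ := by
    exact_mod_cast card_union_of_disjoint hsep₁.disjoint_right_sep
  have hS₁' : (#S₁ : ℝ) ≤ α * Fintype.card V * (#B₁ + #S₁) := by
    rw [← hB₁S₁]
    calc (#S₁ : ℝ) ≤ α * #(A₁ ∪ S₁) * #(B₁ ∪ S₁) := hS₁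
      _ ≤ α * Fintype.card V * #(B₁ ∪ S₁) := by gcongr
  refine ⟨A₁, B ∪ B₁, S ∪ S₁, ⟨hsep.refine hsep₁, by linarith, ?_⟩, ?_⟩
  · calc (#(S ∪ S₁) : ℝ) ≤ #S + #S₁ := hcardS
      _ ≤ α * Fintype.card V * (Fintype.card V - #A) + α * Fintype.card V * (#B₁ + #S₁) :=
        add_le_add hS hS₁'
      _ = α * Fintype.card V * (Fintype.card V - #A₁) := by rw [← hA₁]; ring
  · have := hsep₁.card_add
    have := hB₁.card_pos
    omega

theorem IsPartialSeparation.exists_card_le {α : ℝ} (hα : 0 ≤ α)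
    (hsparse : ∀ W : Finset V, 2 / 3 * (Fintype.card V : ℝ) ≤ #W → G.HasSparseVertexCut α W)
    {A B S : Finset V} (h : G.IsPartialSeparation α A B S) :
    ∃ A' B' S' : Finset V, G.IsPartialSeparation α A' B' S' ∧
      (#A' : ℝ) ≤ 2 / 3 * Fintype.card V := by
  induction hk : #A using Nat.strong_induction_on generalizing A B S with
  | _ k ih =>
    by_cases hA : (#A : ℝ) ≤ 2 / 3 * Fintype.card V
    · exact ⟨A, B, S, h, hA⟩
    · rw [not_le] at hA
      obtain ⟨A', B', S', h', hA'⟩ := h.exists_card_lt hα hA (hsparse A hA.le)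
      exact ih _ (hk ▸ hA') h' rfl

end SimpleGraph

/-- If every induced subgraph of `G` on at least `(2/3)n` vertices has vertex sparsity at
most `α` (i.e., admits a vertex cut `(A,B,S)` with `|S| ≤ α·|A∪S|·|B∪S|`), then `G` has a
separator of size at most `α·n²`. -/
theorem stmt_13 {V : Type*} [Fintype V] [DecidableEq V] (G : SimpleGraph V)
    (n : ℕ) (hn : Fintype.card V = n) (α : ℝ) (hα : 0 < α)
    (hsparse : ∀ W : Finset V, (2 / 3) * (n : ℝ) ≤ (W.card : ℝ) →
      ∃ A B S : Finset V, A.Nonempty ∧ B.Nonempty ∧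
        Disjoint A B ∧ Disjoint A S ∧ Disjoint B S ∧ A ∪ B ∪ S = W ∧
        (∀ a ∈ A, ∀ b ∈ B, ¬ G.Adj a b) ∧
        (S.card : ℝ) ≤ α * ((A ∪ S).card : ℝ) * ((B ∪ S).card : ℝ)) :
    ∃ S A B : Finset V, Disjoint A B ∧ Disjoint A S ∧ Disjoint B S ∧
      A ∪ B ∪ S = Finset.univ ∧ (∀ a ∈ A, ∀ b ∈ B, ¬ G.Adj a b) ∧
      (A.card : ℝ) ≤ (2 / 3) * (n : ℝ) ∧ (B.card : ℝ) ≤ (2 / 3) * (n : ℝ) ∧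
      (S.card : ℝ) ≤ α * (n : ℝ) ^ 2 := by
  subst hn
  have hcuts : ∀ W : Finset V, 2 / 3 * (Fintype.card V : ℝ) ≤ #W → G.HasSparseVertexCut α W :=
    fun W hW ↦
      let ⟨A, B, S, hA, hB, h₁, h₂, h₃, h₄, h₅, hS⟩ := hsparse W hW
      ⟨A, B, S, hA, hB, ⟨h₁, h₂, h₃, h₄, h₅⟩, hS⟩
  obtain ⟨A, B, S, ⟨hsep, hB, hS⟩, hA⟩ :=
    (SimpleGraph.isPartialSeparation_univ α).exists_card_le hα.le hcuts
  refine ⟨S, A, B, hsep.1, hsep.2, hsep.3, hsep.4, hsep.5, hA, hB, ?_⟩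
  calc (#S : ℝ) ≤ α * Fintype.card V * (Fintype.card V - #A) := hS
    _ ≤ α * (Fintype.card V : ℝ) ^ 2 := by
      rw [sq, mul_assoc]
      gcongr
      exact sub_le_self _ (Nat.cast_nonneg _)
end

section
/- Let G be an n-vertex graph with maximum degree at most Δ such that espars(G) ≥ β/n for constants Δ and β > 0. Then for n sufficiently large (in terms of Δ, β), at least half of the vertex pairs {u,v} have graph distance d(u,v) ≥ c·log n for a constant c = c(Δ) > 0; consequently econg(G) = Ω(log n / espars(G)). -/
open Finset

/-- `φ` is a multicommodity flow sending at least one unit of flow between every pair of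
distinct vertices (pairs represented by ordered pairs `u < v`). -/
def IsUnitFlow16 {V : Type} [Fintype V] [DecidableEq V] [LinearOrder V]
    (G : SimpleGraph V) [DecidableRel G.Adj]
    (φ : ∀ u v : V, G.Path u v → ℝ) : Prop :=
  (∀ u v (P : G.Path u v), 0 ≤ φ u v P) ∧
  (∀ u v : V, u < v → 1 ≤ ∑ P : G.Path u v, φ u v P)

noncomputable def edgeLoad16 {V : Type} [Fintype V] [DecidableEq V] [LinearOrder V]
    (G : SimpleGraph V) [DecidableRel G.Adj]
    (φ : ∀ u v : V, G.Path u v → ℝ) (e : Sym2 V) : ℝ :=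
  ∑ p ∈ Finset.univ.filter (fun p : V × V => p.1 < p.2),
    ∑ P : G.Path p.1 p.2,
      (if e ∈ (P : G.Walk p.1 p.2).edges then φ p.1 p.2 P else 0)

noncomputable def edgeCongG16 {V : Type} [Fintype V] [DecidableEq V] [LinearOrder V]
    (G : SimpleGraph V) [DecidableRel G.Adj] : ℝ :=
  sInf {r : ℝ | ∃ φ : ∀ u v : V, G.Path u v → ℝ, IsUnitFlow16 G φ ∧
    r = sSup {x : ℝ | ∃ e ∈ G.edgeSet, x = edgeLoad16 G φ e}}

def cutEdges16 {V : Type} [Fintype V] [DecidableEq V]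
    (G : SimpleGraph V) [DecidableRel G.Adj] (A : Finset V) : ℕ :=
  (Finset.univ.filter fun p : V × V => p.1 ∈ A ∧ p.2 ∉ A ∧ G.Adj p.1 p.2).card

noncomputable def edgeSparsity16 {V : Type} [Fintype V] [DecidableEq V]
    (G : SimpleGraph V) [DecidableRel G.Adj] : ℝ :=
  sInf {r : ℝ | ∃ A : Finset V, A.Nonempty ∧ A ≠ Finset.univ ∧
    r = (cutEdges16 G A : ℝ) / ((A.card : ℝ) * ((Aᶜ : Finset V).card : ℝ))}

/-!
A ball of radius `k` in a graph of maximum degree `Δ` has at most `(Δ + 1) ^ k` vertices, so for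
`k ≈ log n / (2 log (Δ + 2))` it holds at most `√n ≤ n / 2` of them: at least half of the ordered
pairs are at distance `≥ k`. The sparsity bound forces `G` to be connected. A unit flow routes
every pair `u < v` along paths of length `≥ d(u, v)`, so the total edge load is at least
`∑ d(u, v) = Ω(n² log n)`, spread over at most `Δ n / 2` edges: some edge carries `Ω(n log n)`,
which is `Ω(log n / espars G)` because `espars G ≥ β / n`.
-/

open Real

noncomputable def distConst (Δ : ℕ) : ℝ := (2 * log ((Δ : ℝ) + 2))⁻¹

lemma log_natCast_add_two_pos (Δ : ℕ) : 0 < log ((Δ : ℝ) + 2) :=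
  log_pos (by linarith [(Nat.cast_nonneg Δ : (0 : ℝ) ≤ Δ)])

lemma distConst_pos (Δ : ℕ) : 0 < distConst Δ := by
  have := log_natCast_add_two_pos Δ
  unfold distConst; positivity

lemma Finset.sum_eq_two_nsmul_sum_filter_fst_lt_snd {V M : Type*} [Fintype V] [LinearOrder V]
    [AddCommMonoid M] (f : V × V → M) (hswap : ∀ p, f p.swap = f p)
    (hdiag : ∀ x, f (x, x) = 0) :
    ∑ p, f p = 2 • ∑ p with p.1 < p.2, f p := by
  have hsplit : ∀ p : V × V,
      f p = (if p.1 < p.2 then f p else 0) + (if p.2 < p.1 then f p else 0) := by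
    rintro ⟨x, y⟩
    rcases lt_trichotomy x y with h | rfl | h
    · simp [h, h.not_gt]
    · simp [hdiag]
    · simp [h, h.not_gt]
  have hmirror : ∑ p : V × V, (if p.2 < p.1 then f p else 0) =
      ∑ p : V × V, (if p.1 < p.2 then f p else 0) :=
    Fintype.sum_equiv (Equiv.prodComm V V) _ _ fun p => by simp [hswap]
  rw [Finset.sum_congr rfl fun p _ => hsplit p, Finset.sum_add_distrib, hmirror, two_nsmul,
    Finset.sum_filter]

lemma add_one_pow_floor_distConst_mul_log_le_half (Δ : ℕ) {n : ℝ} (hn : 4 ≤ n) :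
    ((Δ : ℝ) + 1) ^ ⌊distConst Δ * log n⌋₊ ≤ n / 2 := by
  set T := distConst Δ * log n
  have hL := log_natCast_add_two_pos Δ
  have hT : ((Δ : ℝ) + 2) ^ T = √n := by
    rw [rpow_def_of_pos (by positivity), sqrt_eq_rpow, rpow_def_of_pos (by linarith)]
    congr 1
    simp only [T, distConst]
    field_simp
  calc ((Δ : ℝ) + 1) ^ ⌊T⌋₊ ≤ ((Δ : ℝ) + 2) ^ ⌊T⌋₊ := by gcongr; linarith
    _ = ((Δ : ℝ) + 2) ^ (⌊T⌋₊ : ℝ) := (rpow_natCast _ _).symm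
    _ ≤ ((Δ : ℝ) + 2) ^ T := by
        gcongr
        · linarith [Nat.cast_nonneg (α := ℝ) Δ]
        · exact Nat.floor_le (mul_nonneg (distConst_pos Δ).le (log_nonneg (by linarith)))
    _ = √n := hT
    _ ≤ n / 2 := by
        rw [sqrt_le_left (by positivity)]
        nlinarith

namespace SimpleGraph

variable {V : Type} {G : SimpleGraph V}

lemma Reachable.exists_adj_dist_eq_of_dist_eq_add_one {u v : V} {k : ℕ} (hr : G.Reachable u v)
    (h : G.dist u v = k + 1) : ∃ w, G.Adj w v ∧ G.dist u w = k := by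
  obtain ⟨p, hp⟩ := hr.exists_walk_length_eq_dist
  have hne : ¬p.Nil := fun hnil => by simp [Walk.Nil.length_eq_zero hnil] at hp; omega
  refine ⟨p.penultimate, p.adj_penultimate hne, le_antisymm ?_ ?_⟩
  · have := dist_le p.dropLast
    have := Walk.length_dropLast_add_one hne
    omega
  · have := (p.adj_penultimate hne).reachable.dist_triangle_right u
    rw [dist_eq_one_iff_adj.mpr (p.adj_penultimate hne)] at this
    omega

variable [Fintype V] [DecidableEq V] [DecidableRel G.Adj] {Δ : ℕ}

lemma Preconnected.card_filter_dist_le_le_pow (hG : G.Preconnected)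
    (hdeg : ∀ v, G.degree v ≤ Δ) (u : V) (k : ℕ) :
    #{v | G.dist u v ≤ k} ≤ (Δ + 1) ^ k := by
  induction k with
  | zero =>
    have hball : ({v | G.dist u v ≤ 0} : Finset V) ⊆ {u} := fun v hv => by
      simp only [mem_filter, mem_univ, true_and, Nat.le_zero, (hG u v).dist_eq_zero_iff] at hv
      simp [hv]
    simpa using card_le_card hball
  | succ k ih =>
    have hball : ({v | G.dist u v ≤ k + 1} : Finset V) ⊆
        ({v | G.dist u v ≤ k} : Finset V).biUnion fun w => insert w (G.neighborFinset w) := by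
      intro v hv
      simp only [mem_filter, mem_univ, true_and, mem_biUnion] at hv ⊢
      rcases hv.lt_or_eq with hlt | heq
      · exact ⟨v, by omega, mem_insert_self _ _⟩
      · obtain ⟨w, hwv, hw⟩ := (hG u v).exists_adj_dist_eq_of_dist_eq_add_one heq
        exact ⟨w, hw.le, mem_insert_of_mem ((mem_neighborFinset _ _ _).mpr hwv)⟩
    calc #{v | G.dist u v ≤ k + 1}
        ≤ ∑ w ∈ {v | G.dist u v ≤ k}, #(insert w (G.neighborFinset w)) :=
          (card_le_card hball).trans card_biUnion_le
      _ ≤ ∑ _w ∈ {v | G.dist u v ≤ k}, (Δ + 1) := sum_le_sum fun w _ =>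
          (card_insert_le _ _).trans (by simpa using hdeg w)
      _ ≤ (Δ + 1) ^ (k + 1) := by
          rw [sum_const, smul_eq_mul, pow_succ]
          exact Nat.mul_le_mul_right _ ih

lemma Preconnected.card_sub_pow_floor_le_card_filter_le_dist (hG : G.Preconnected)
    (hdeg : ∀ v, G.degree v ≤ Δ) (u : V) (T : ℝ) :
    (Fintype.card V : ℝ) - ((Δ : ℝ) + 1) ^ ⌊T⌋₊ ≤
      #{v | u ≠ v ∧ T ≤ G.dist u v} := by
  have houtside : ({v | G.dist u v ≤ ⌊T⌋₊} : Finset V)ᶜ ⊆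
      ({v | u ≠ v ∧ T ≤ G.dist u v} : Finset V) := by
    intro v hv
    simp only [mem_compl, mem_filter, mem_univ, true_and, not_le] at hv ⊢
    refine ⟨fun huv => by simp [huv] at hv, (Nat.lt_floor_add_one T).le.trans ?_⟩
    exact_mod_cast hv
  have hcard := card_le_card houtside
  rw [card_compl] at hcard
  have hball : (#{v | G.dist u v ≤ ⌊T⌋₊} : ℝ) ≤ ((Δ : ℝ) + 1) ^ ⌊T⌋₊ := by
    exact_mod_cast hG.card_filter_dist_le_le_pow hdeg u _
  have := card_le_univ ({v | G.dist u v ≤ ⌊T⌋₊} : Finset V)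
  rw [← Nat.cast_le (α := ℝ), Nat.cast_sub this] at hcard
  linarith

lemma Preconnected.half_card_pairs_le_card_far_pairs (hG : G.Preconnected)
    (hdeg : ∀ v, G.degree v ≤ Δ) (hn : 4 ≤ Fintype.card V) :
    (Fintype.card V : ℝ) * ((Fintype.card V : ℝ) - 1) / 2 ≤
      #{p : V × V | p.1 ≠ p.2 ∧ distConst Δ * log (Fintype.card V) ≤ G.dist p.1 p.2} := by
  have hn' : (4 : ℝ) ≤ Fintype.card V := by exact_mod_cast hn
  have hball := add_one_pow_floor_distConst_mul_log_le_half Δ hn'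
  rw [card_filter, Fintype.sum_prod_type]
  simp only [← card_filter]
  push_cast
  calc (Fintype.card V : ℝ) * ((Fintype.card V : ℝ) - 1) / 2
        ≤ ∑ _u : V, ((Fintype.card V : ℝ) - Fintype.card V / 2) := by
        rw [sum_const, card_univ, nsmul_eq_mul]; nlinarith
    _ ≤ _ := sum_le_sum fun u _ =>
        (sub_le_sub_left hball _).trans (hG.card_sub_pow_floor_le_card_filter_le_dist hdeg u _)

lemma preconnected_of_cutEdges16_ne_zero
    (hcut : ∀ A : Finset V, A.Nonempty → A ≠ univ → cutEdges16 G A ≠ 0) : G.Preconnected := by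
  intro u v
  by_contra huv
  refine hcut {w | G.Reachable u w} ⟨u, by simp⟩
    (fun h => huv (by simpa using eq_univ_iff_forall.mp h v)) ?_
  rw [cutEdges16, card_eq_zero, filter_eq_empty_iff]
  rintro ⟨a, b⟩ - ⟨ha, hb, hab⟩
  simp only [mem_filter, mem_univ, true_and] at ha hb
  exact hb (ha.trans hab.reachable)

lemma le_edgeSparsity16 [Nontrivial V] {b : ℝ}
    (h : ∀ A : Finset V, A.Nonempty → A ≠ univ →
      b ≤ (cutEdges16 G A : ℝ) / ((#A : ℝ) * (#Aᶜ : ℝ))) :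
    b ≤ edgeSparsity16 G := by
  obtain ⟨v⟩ := ‹Nontrivial V›.to_nonempty
  refine le_csInf ⟨_, {v}, singleton_nonempty v, singleton_ne_univ v, rfl⟩ ?_
  rintro _ ⟨A, hA, hAu, rfl⟩
  exact h A hA hAu

omit [DecidableEq V] in
lemma two_mul_card_edgeFinset_le (hdeg : ∀ v, G.degree v ≤ Δ) :
    2 * #G.edgeFinset ≤ Fintype.card V * Δ := by
  rw [← sum_degrees_eq_twice_card_edges]
  simpa using sum_le_sum fun v (_ : v ∈ univ) => hdeg v

end SimpleGraph

section Flow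

variable {V : Type} [Fintype V] [DecidableEq V] [LinearOrder V] {G : SimpleGraph V}
  [DecidableRel G.Adj] {φ : ∀ u v : V, G.Path u v → ℝ}

lemma sum_edgeLoad16_eq (φ : ∀ u v : V, G.Path u v → ℝ) :
    ∑ e ∈ G.edgeFinset, edgeLoad16 G φ e =
      ∑ p : V × V with p.1 < p.2, ∑ P : G.Path p.1 p.2,
        φ p.1 p.2 P * (P : G.Walk p.1 p.2).length := by
  unfold edgeLoad16
  rw [sum_comm]
  refine sum_congr rfl fun p _ => ?_
  rw [sum_comm]
  refine sum_congr rfl fun P _ => ?_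
  have hedges : ({e ∈ G.edgeFinset | e ∈ (P : G.Walk p.1 p.2).edges} : Finset (Sym2 V)) =
      (P : G.Walk p.1 p.2).edges.toFinset := by
    ext e
    simp only [mem_filter, SimpleGraph.mem_edgeFinset, List.mem_toFinset, and_iff_right_iff_imp]
    exact fun he => SimpleGraph.Walk.edges_subset_edgeSet _ he
  rw [← sum_filter, hedges, sum_const, List.toFinset_card_of_nodup P.2.isTrail.edges_nodup,
    SimpleGraph.Walk.length_edges, nsmul_eq_mul, mul_comm]

lemma IsUnitFlow16.edgeLoad16_nonneg (hφ : IsUnitFlow16 G φ) (e : Sym2 V) :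
    0 ≤ edgeLoad16 G φ e :=
  sum_nonneg fun _ _ => sum_nonneg fun _ _ => by split_ifs <;> simp [hφ.1]

lemma IsUnitFlow16.sum_dist_le_sum_edgeLoad16 (hφ : IsUnitFlow16 G φ) :
    ∑ p : V × V with p.1 < p.2, (G.dist p.1 p.2 : ℝ) ≤
      ∑ e ∈ G.edgeFinset, edgeLoad16 G φ e := by
  rw [sum_edgeLoad16_eq]
  refine sum_le_sum fun p hp => ?_
  calc (G.dist p.1 p.2 : ℝ) ≤ G.dist p.1 p.2 * ∑ P : G.Path p.1 p.2, φ p.1 p.2 P :=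
        le_mul_of_one_le_right (Nat.cast_nonneg _) (hφ.2 _ _ (mem_filter.mp hp).2)
    _ = ∑ P : G.Path p.1 p.2, φ p.1 p.2 P * G.dist p.1 p.2 := by
        rw [mul_sum]; exact sum_congr rfl fun _ _ => mul_comm _ _
    _ ≤ _ := sum_le_sum fun P _ =>
        mul_le_mul_of_nonneg_left (by exact_mod_cast SimpleGraph.dist_le _) (hφ.1 _ _ _)

lemma IsUnitFlow16.sum_dist_le_card_edgeFinset_mul_sSup (hφ : IsUnitFlow16 G φ) :
    ∑ p : V × V with p.1 < p.2, (G.dist p.1 p.2 : ℝ) ≤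
      #G.edgeFinset * sSup {x : ℝ | ∃ e ∈ G.edgeSet, x = edgeLoad16 G φ e} := by
  have hbdd : BddAbove {x : ℝ | ∃ e ∈ G.edgeSet, x = edgeLoad16 G φ e} :=
    ((G.edgeSet.toFinite.image (edgeLoad16 G φ)).subset
      (by rintro x ⟨e, he, rfl⟩; exact ⟨e, he, rfl⟩)).bddAbove
  calc _ ≤ ∑ e ∈ G.edgeFinset, edgeLoad16 G φ e := hφ.sum_dist_le_sum_edgeLoad16
    _ ≤ ∑ _e ∈ G.edgeFinset, sSup {x : ℝ | ∃ e ∈ G.edgeSet, x = edgeLoad16 G φ e} :=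
        sum_le_sum fun e he => le_csSup hbdd ⟨e, SimpleGraph.mem_edgeFinset.mp he, rfl⟩
    _ = _ := by rw [sum_const, nsmul_eq_mul]

lemma SimpleGraph.Preconnected.isUnitFlow16_one (hG : G.Preconnected) :
    IsUnitFlow16 G fun _ _ _ => 1 := by
  refine ⟨fun _ _ _ => zero_le_one, fun u v _ => ?_⟩
  have : Nonempty (G.Path u v) := (hG u v).elim fun p => ⟨p.toPath⟩
  simp [Nat.one_le_iff_ne_zero]

lemma SimpleGraph.Preconnected.sum_dist_div_card_edgeFinset_le_edgeCongG16
    (hG : G.Preconnected) :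
    (∑ p : V × V with p.1 < p.2, (G.dist p.1 p.2 : ℝ)) / #G.edgeFinset ≤ edgeCongG16 G := by
  refine le_csInf ⟨_, _, hG.isUnitFlow16_one, rfl⟩ ?_
  rintro _ ⟨φ, hφ, rfl⟩
  refine div_le_of_le_mul₀ (Nat.cast_nonneg _) ?_ ?_
  · exact Real.sSup_nonneg fun _ ⟨e, _, hx⟩ => hx ▸ hφ.edgeLoad16_nonneg e
  · rw [mul_comm]; exact hφ.sum_dist_le_card_edgeFinset_mul_sSup

end Flow

lemma SimpleGraph.Preconnected.distConst_mul_log_mul_card_div_le_edgeCongG16 {V : Type}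
    [Fintype V] [DecidableEq V] [LinearOrder V] {G : SimpleGraph V} [DecidableRel G.Adj] {Δ : ℕ}
    (hG : G.Preconnected) (hdeg : ∀ v, G.degree v ≤ Δ) (hn : 4 ≤ Fintype.card V) :
    distConst Δ * log (Fintype.card V) * Fintype.card V / (4 * ((Δ : ℝ) + 1)) ≤
      edgeCongG16 G := by
  have hfar := hG.half_card_pairs_le_card_far_pairs hdeg hn
  have hdist := sum_eq_two_nsmul_sum_filter_fst_lt_snd (fun p : V × V => (G.dist p.1 p.2 : ℝ))
    (fun p => by simp [SimpleGraph.dist_comm]) (by simp)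
  have : Nontrivial V := Fintype.one_lt_card_iff_nontrivial.mp (by omega)
  have hE : 0 < #G.edgeFinset := by
    obtain ⟨v⟩ := ‹Nontrivial V›.to_nonempty
    obtain ⟨w, hvw⟩ := hG.exists_adj_of_nontrivial v
    exact card_pos.mpr ⟨s(v, w), SimpleGraph.mem_edgeFinset.mpr hvw⟩
  have hE' : 2 * (#G.edgeFinset : ℝ) ≤ Fintype.card V * Δ := by
    exact_mod_cast SimpleGraph.two_mul_card_edgeFinset_le hdeg
  have hn' : (4 : ℝ) ≤ Fintype.card V := by exact_mod_cast hn
  set n : ℝ := (Fintype.card V : ℝ)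
  set T := distConst Δ * log n
  set far : Finset (V × V) := {p | p.1 ≠ p.2 ∧ T ≤ G.dist p.1 p.2}
  set S := ∑ p : V × V with p.1 < p.2, (G.dist p.1 p.2 : ℝ)
  have hT : 0 ≤ T := mul_nonneg (distConst_pos Δ).le (log_nonneg (by linarith))
  have hS : T * #far ≤ 2 * S := by
    rw [nsmul_eq_mul, Nat.cast_ofNat] at hdist
    rw [← hdist]
    calc T * #far = #far • T := by rw [nsmul_eq_mul, mul_comm]
      _ ≤ ∑ p ∈ far, (G.dist p.1 p.2 : ℝ) :=
          card_nsmul_le_sum _ _ _ fun p hp => (mem_filter.mp hp).2.2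
      _ ≤ _ := sum_le_sum_of_subset_of_nonneg (subset_univ _) fun _ _ _ => Nat.cast_nonneg _
  refine le_trans ?_ hG.sum_dist_div_card_edgeFinset_le_edgeCongG16
  rw [div_le_div_iff₀ (by positivity) (by exact_mod_cast hE)]
  calc T * n * #G.edgeFinset ≤ T * n * (n * Δ / 2) := by gcongr; linarith
    _ ≤ T * n * ((n - 1) * (Δ + 1)) := by gcongr; nlinarith
    _ ≤ S * (4 * (Δ + 1)) := by
        have := (mul_le_mul_of_nonneg_left hfar hT).trans hS
        nlinarith

/-- For bounded-degree expanders (`espars(G) ≥ β/n`, maximum degree ≤ `Δ`), for `n` large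
enough at least half of the vertex pairs are at graph distance `≥ c·log n`, and consequently
`econg(G) = Ω(log n / espars(G))`. -/
theorem stmt_16 (Δ : ℕ) (β : ℝ) (hβ : 0 < β) :
    ∃ c > (0 : ℝ), ∃ c' > (0 : ℝ), ∃ N : ℕ,
      ∀ (V : Type) [Fintype V] [DecidableEq V] [LinearOrder V]
        (G : SimpleGraph V) [DecidableRel G.Adj],
        (∀ v : V, G.degree v ≤ Δ) →
        (∀ A : Finset V, A.Nonempty → A ≠ Finset.univ →
          β / (Fintype.card V : ℝ) ≤
            (cutEdges16 G A : ℝ) / ((A.card : ℝ) * ((Aᶜ : Finset V).card : ℝ))) →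
        N ≤ Fintype.card V →
        ((Fintype.card V : ℝ) * ((Fintype.card V : ℝ) - 1) / 2 ≤
          ((Finset.univ.filter (fun p : V × V => p.1 ≠ p.2 ∧
            c * Real.log (Fintype.card V) ≤ (G.dist p.1 p.2 : ℝ))).card : ℝ)) ∧
        c' * Real.log (Fintype.card V) / edgeSparsity16 G ≤ edgeCongG16 G := by
  refine ⟨distConst Δ, distConst_pos Δ,
    distConst Δ * β / (4 * ((Δ : ℝ) + 1)), by have := distConst_pos Δ; positivity, 4, ?_⟩
  intro V _ _ _ G _ hdeg hcut hn
  have hn' : (4 : ℝ) ≤ Fintype.card V := by exact_mod_cast hn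
  have hG : G.Preconnected := SimpleGraph.preconnected_of_cutEdges16_ne_zero fun A hA hAu h0 => by
    have := hcut A hA hAu
    rw [h0, Nat.cast_zero, zero_div] at this
    exact (div_pos hβ (by linarith)).not_ge this
  have : Nontrivial V := Fintype.one_lt_card_iff_nontrivial.mp (by omega)
  have hsparse : β / Fintype.card V ≤ edgeSparsity16 G := SimpleGraph.le_edgeSparsity16 hcut
  refine ⟨hG.half_card_pairs_le_card_far_pairs hdeg hn, ?_⟩
  have := distConst_pos Δ
  calc _ ≤ distConst Δ * β / (4 * ((Δ : ℝ) + 1)) * log (Fintype.card V) /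
        (β / Fintype.card V) := div_le_div_of_nonneg_left (by positivity) (by positivity) hsparse
    _ = _ := by field_simp
    _ ≤ edgeCongG16 G := hG.distConst_mul_log_mul_card_div_le_edgeCongG16 hdeg hn
end
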